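/- Let P ∈ ℂ[x] be a polynomial of degree n ≥ 1 and let T : 𝒜(P) → ℂ be a ℂ-linear map. Then T is a trace, i.e. T(ab) = T(ba) for all a, b ∈ 𝒜(P), if and only if the following two conditions hold: (1) T(a) = 0 for every a ∈ 𝒜(P) such that ha − ah = 2ka for some nonzero integer k; (2) T(S(h−1)·P(h−1)) = T(S(h+1)·P(h+1)) for every S ∈ ℂ[x]. Moreover, the ℂ-vector space of traces on 𝒜(P) has dimension n − 1; equivalently, the ℂ-linear subspace {S(x+1)P(x+1) − S(x−1)P(x−1) : S ∈ ℂ[x]} of ℂ[x] has codimension n − 1. -/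

import Mathlib

/-!
The monomials `q(h) eⁱ` and `q(h) fⁱ` span `𝒜(P)` and are eigenvectors of `ad h` with eigenvalues
`2i` and `-2i`. A trace kills every eigenvector `a` of nonzero eigenvalue `c`, because
`c T(a) = T(ha - ah) = 0`. Conversely, if `T` kills them, then `T(xm) = T(mx)` for a generator `x`
and a monomial `m` holds trivially unless `xm` has weight `0`; for `x = h` that case is trivial too,
and for `x = e, f` it is `m = q(h) f`, resp. `m = q(h) e`, where it is exactly condition (2).

So a trace is determined by `φ = T ∘ (q ↦ q(h))`, which vanishes on the image of
`S ↦ S(x+1)P(x+1) - S(x-1)P(x-1)`. Every such `φ` occurs: `𝒜(P)` acts `ℂ[x]`-linearly on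
`ℤ → ℂ[x]`, `h` multiplying slot `j` by `x + 2j`, `e` shifting the slots up and `f` shifting them
down and multiplying by `P(x + 2j + 1)`, and `T(a) = φ((a δ₀)₀)` is a trace. Hence the traces form
the dual of `ℂ[x] / im`, and `im` is complemented by the polynomials of degree `< n - 1`, since the
image of `S ≠ 0` has degree `deg S + n - 1` and leading coefficient `2 (deg S + n) lc(S) lc(P)`.
-/

open Polynomial
open scoped Classical

noncomputable section

abbrev FA : Type := FreeAlgebra ℂ (Fin 3)

def Egen : FA := FreeAlgebra.ι ℂ 0
def Fgen : FA := FreeAlgebra.ι ℂ 1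
def Hgen : FA := FreeAlgebra.ι ℂ 2

/-- The defining relations of the deformation `𝒜(P)` of the type A Kleinian singularity:
`he − eh = 2e`, `hf − fh = −2f`, `ef = P(h−1)`, `fe = P(h+1)`. -/
inductive ARel (P : ℂ[X]) : FA → FA → Prop
  | he : ARel P (Hgen * Egen - Egen * Hgen) (2 * Egen)
  | hf : ARel P (Hgen * Fgen - Fgen * Hgen) (-(2 * Fgen))
  | ef : ARel P (Egen * Fgen) (Polynomial.aeval (Hgen - 1) P)
  | fe : ARel P (Fgen * Egen) (Polynomial.aeval (Hgen + 1) P)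

/-- The algebra `𝒜(P)`. -/
abbrev AP (P : ℂ[X]) : Type := RingQuot (ARel P)

def eA (P : ℂ[X]) : AP P := RingQuot.mkAlgHom ℂ (ARel P) Egen
def fA (P : ℂ[X]) : AP P := RingQuot.mkAlgHom ℂ (ARel P) Fgen
def hA (P : ℂ[X]) : AP P := RingQuot.mkAlgHom ℂ (ARel P) Hgen

/-- `P` is real on the imaginary axis: `P(it) ∈ ℝ` for all real `t`. -/
def RealOnIm (P : ℂ[X]) : Prop := ∀ t : ℝ, ∃ r : ℝ, P.eval (Complex.I * t) = r

/-- An invariant Hermitian (sesquilinear) form on the regular bimodule `𝒜(P)`. -/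
structure InvForm (P : ℂ[X]) where
  B : AP P → AP P → ℂ
  add_left : ∀ u v w, B (u + v) w = B u w + B v w
  smul_left : ∀ (c : ℂ) (u v), B (c • u) v = c * B u v
  conj_symm : ∀ u v, B u v = starRingEnd ℂ (B v u)
  e_left : ∀ u v, B (eA P * u) v = - B u (v * fA P)
  h_left : ∀ u v, B (hA P * u) v = - B u (v * hA P)
  f_left : ∀ u v, B (fA P * u) v = - B u (v * eA P)
  e_right : ∀ u v, B (u * eA P) v = - B u (fA P * v)
  h_right : ∀ u v, B (u * hA P) v = - B u (hA P * v)
  f_right : ∀ u v, B (u * fA P) v = - B u (eA P * v)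

/-- The regular bimodule `𝒜(P)` is unitarizable: there is a positive definite
invariant Hermitian form on it. -/
def Unitarizable (P : ℂ[X]) : Prop :=
  ∃ Φ : InvForm P, ∀ u : AP P, u ≠ 0 → ∃ r : ℝ, 0 < r ∧ Φ.B u u = r


/-- The subspace of traces on `𝒜(P)` inside the dual space. -/
def tracesSubmodule (P : ℂ[X]) : Submodule ℂ (AP P →ₗ[ℂ] ℂ) where
  carrier := {T | ∀ a b : AP P, T (a * b) = T (b * a)}
  add_mem' := by
    intro T T' hT hT' a b
    simp only [LinearMap.add_apply, hT a b, hT' a b]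
  zero_mem' := by
    intro a b
    rfl
  smul_mem' := by
    intro c T hT a b
    simp only [LinearMap.smul_apply, hT a b]

/-- The linear map `S(x) ↦ S(x+1)P(x+1) − S(x−1)P(x−1)` on `ℂ[x]`. -/
def shiftMap (P : ℂ[X]) : ℂ[X] →ₗ[ℂ] ℂ[X] where
  toFun S := (S * P).comp (X + 1) - (S * P).comp (X - 1)
  map_add' S T := by
    simp only [add_mul, Polynomial.add_comp]
    ring
  map_smul' c S := by
    simp only [smul_mul_assoc, Polynomial.smul_comp, RingHom.id_apply, smul_sub]

section AdEigen

variable {R A B M : Type*} [CommRing R] [Ring A] [Algebra R A] [Ring B] [Algebra R B]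
  [AddCommGroup M] [Module R M]

def IsAdEigen (x a : A) (c : R) : Prop := x * a - a * x = c • a

namespace IsAdEigen

variable {x a b : A} {c d : R}

theorem mul (ha : IsAdEigen x a c) (hb : IsAdEigen x b d) : IsAdEigen x (a * b) (c + d) := by
  unfold IsAdEigen at *
  calc x * (a * b) - a * b * x = (x * a - a * x) * b + a * (x * b - b * x) := by noncomm_ring
    _ = (c + d) • (a * b) := by rw [ha, hb, smul_mul_assoc, mul_smul_comm, add_smul]

theorem pow (ha : IsAdEigen x a c) (n : ℕ) : IsAdEigen x (a ^ n) (n • c) := by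
  induction n with
  | zero => simp [IsAdEigen]
  | succ n ih => rw [pow_succ, succ_nsmul]; exact ih.mul ha

theorem map (f : A →ₐ[R] B) (ha : IsAdEigen x a c) : IsAdEigen (f x) (f a) c := by
  simpa [IsAdEigen, ← map_mul, ← map_sub] using congrArg f ha

theorem map_mul_sub_map_mul (T : A →ₗ[R] M) (ha : IsAdEigen x a c) :
    T (x * a) - T (a * x) = c • T a := by
  rw [← map_sub, ha, map_smul]

end IsAdEigen

theorem isAdEigen_aeval_self (x : A) (p : R[X]) : IsAdEigen x (aeval x p) (0 : R) := by
  have hx : Commute x (aeval x p) := by simpa using (commute_X p).map (aeval x)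
  simp [IsAdEigen, hx.eq]

end AdEigen

theorem SemiconjBy.aeval {R A : Type*} [CommSemiring R] [Semiring A] [Algebra R A] {a x y : A}
    (h : SemiconjBy a x y) (p : R[X]) : SemiconjBy a (aeval x p) (aeval y p) := by
  induction p using Polynomial.induction_on' with
  | add p q hp hq => simpa only [map_add] using hp.add_right hq
  | monomial n c =>
    simp only [aeval_monomial]
    exact SemiconjBy.mul_right (Algebra.commute_algebraMap_right c a) (h.pow_right n)

section Commutant

variable {R A M : Type*} [CommRing R] [Ring A] [Algebra R A] [AddCommGroup M] [Module R M]

def IsTrace (T : A →ₗ[R] M) : Prop := ∀ a b, T (a * b) = T (b * a)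

def traceCommutant (T : A →ₗ[R] M) : Subalgebra R A where
  carrier := {b | ∀ a, T (a * b) = T (b * a)}
  mul_mem' {b₁ b₂} h₁ h₂ a := by
    rw [← mul_assoc, h₂, ← mul_assoc, h₁, mul_assoc]
  add_mem' h₁ h₂ a := by simp only [mul_add, add_mul, map_add, h₁ a, h₂ a]
  algebraMap_mem' c a := by rw [Algebra.commutes]

theorem mem_traceCommutant_of_span_eq_top {T : A →ₗ[R] M} {s : Set A}
    (hs : Submodule.span R s = ⊤) {b : A} (hb : ∀ m ∈ s, T (m * b) = T (b * m)) :
    b ∈ traceCommutant T := by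
  intro a
  induction (hs ▸ Submodule.mem_top : a ∈ Submodule.span R s) using Submodule.span_induction with
  | mem m hm => exact hb m hm
  | zero => simp
  | add y z _ _ hy hz => simp only [add_mul, mul_add, map_add, hy, hz]
  | smul c y _ hy => simp only [smul_mul_assoc, mul_smul_comm, map_smul, hy]

theorem span_eq_top_of_mul_mem {s t : Set A} (hs : Algebra.adjoin R s = ⊤)
    (ht : (1 : A) ∈ Submodule.span R t) (hmul : ∀ x ∈ s, ∀ m ∈ t, x * m ∈ Submodule.span R t) :
    Submodule.span R t = ⊤ := by
  have hstab : ∀ a ∈ Algebra.adjoin R s, ∀ m ∈ Submodule.span R t,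
      a * m ∈ Submodule.span R t := by
    intro a ha
    induction ha using Algebra.adjoin_induction with
    | mem x hx =>
      intro m hm
      induction hm using Submodule.span_induction with
      | mem m hm => exact hmul x hx m hm
      | zero => simp
      | add y z _ _ hy hz => rw [mul_add]; exact add_mem hy hz
      | smul c y _ hy => rw [mul_smul_comm]; exact Submodule.smul_mem _ c hy
    | algebraMap c => intro m hm; rw [← Algebra.smul_def]; exact Submodule.smul_mem _ c hm
    | add a b _ _ ha hb => intro m hm; rw [add_mul]; exact add_mem (ha m hm) (hb m hm)
    | mul a b _ _ ha hb => intro m hm; rw [mul_assoc]; exact ha _ (hb m hm)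
  refine eq_top_iff.mpr fun a _ => ?_
  simpa using hstab a (hs ▸ Algebra.mem_top) 1 ht

end Commutant

section CentralDifference

variable {R : Type*} [CommRing R]

theorem coeff_comp_add_one_sub_comp_sub_one (Q : R[X]) (k : ℕ) :
    (Q.comp (X + 1) - Q.comp (X - 1)).coeff k =
      (hasseDeriv k Q).eval 1 - (hasseDeriv k Q).eval (-1) := by
  rw [coeff_sub, ← taylor_coeff, ← taylor_coeff, taylor_apply, taylor_apply, C_1, map_neg, C_1,
    ← sub_eq_add_neg]

theorem natDegree_comp_add_one_sub_comp_sub_one_le (Q : R[X]) :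
    (Q.comp (X + 1) - Q.comp (X - 1)).natDegree ≤ Q.natDegree - 1 := by
  refine natDegree_le_iff_coeff_eq_zero.mpr fun k hk => ?_
  have hconst : (hasseDeriv k Q).natDegree = 0 :=
    Nat.eq_zero_of_le_zero ((natDegree_hasseDeriv_le Q k).trans (by omega))
  rw [coeff_comp_add_one_sub_comp_sub_one, eq_C_of_natDegree_eq_zero hconst, eval_C, eval_C,
    sub_self]

theorem coeff_comp_add_one_sub_comp_sub_one_natDegree_sub_one {Q : R[X]} (hQ : 1 ≤ Q.natDegree) :
    (Q.comp (X + 1) - Q.comp (X - 1)).coeff (Q.natDegree - 1) =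
      2 * Q.natDegree * Q.leadingCoeff := by
  have hlin : (hasseDeriv (Q.natDegree - 1) Q).natDegree ≤ 1 :=
    (natDegree_hasseDeriv_le Q _).trans (by omega)
  rw [coeff_comp_add_one_sub_comp_sub_one, eq_X_add_C_of_natDegree_le_one hlin, hasseDeriv_coeff,
    Nat.add_sub_cancel' hQ, Nat.choose_symm_of_eq_add (Nat.sub_add_cancel hQ).symm,
    Nat.choose_one_right]
  simp only [eval_add, eval_mul, eval_C, eval_X, coeff_natDegree]
  ring

variable [IsDomain R] [CharZero R] {Q : R[X]}

theorem natDegree_comp_add_one_sub_comp_sub_one (hQ : 1 ≤ Q.natDegree) :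
    (Q.comp (X + 1) - Q.comp (X - 1)).natDegree = Q.natDegree - 1 := by
  refine natDegree_eq_of_le_of_coeff_ne_zero (natDegree_comp_add_one_sub_comp_sub_one_le Q) ?_
  rw [coeff_comp_add_one_sub_comp_sub_one_natDegree_sub_one hQ]
  have hQ0 : Q ≠ 0 := by rintro rfl; simp at hQ
  exact mul_ne_zero (mul_ne_zero two_ne_zero (by exact_mod_cast (by omega : Q.natDegree ≠ 0)))
    (leadingCoeff_ne_zero.mpr hQ0)

theorem leadingCoeff_comp_add_one_sub_comp_sub_one (hQ : 1 ≤ Q.natDegree) :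
    (Q.comp (X + 1) - Q.comp (X - 1)).leadingCoeff = 2 * Q.natDegree * Q.leadingCoeff := by
  rw [leadingCoeff, natDegree_comp_add_one_sub_comp_sub_one hQ,
    coeff_comp_add_one_sub_comp_sub_one_natDegree_sub_one hQ]

end CentralDifference

section Relations

variable {P : ℂ[X]}

theorem hA_mul_eA_sub : hA P * eA P - eA P * hA P = 2 * eA P := by
  simpa [eA, hA, map_ofNat] using RingQuot.mkAlgHom_rel ℂ (ARel.he (P := P))

theorem hA_mul_fA_sub : hA P * fA P - fA P * hA P = -(2 * fA P) := by
  simpa [fA, hA, map_ofNat] using RingQuot.mkAlgHom_rel ℂ (ARel.hf (P := P))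

theorem eA_mul_fA : eA P * fA P = aeval (hA P - 1) P := by
  simpa [eA, fA, hA, ← aeval_algHom_apply] using RingQuot.mkAlgHom_rel ℂ (ARel.ef (P := P))

theorem fA_mul_eA : fA P * eA P = aeval (hA P + 1) P := by
  simpa [eA, fA, hA, ← aeval_algHom_apply] using RingQuot.mkAlgHom_rel ℂ (ARel.fe (P := P))

theorem adjoin_eA_fA_hA : Algebra.adjoin ℂ {eA P, fA P, hA P} = ⊤ := by
  have hrange :
      Set.range (RingQuot.mkAlgHom ℂ (ARel P) ∘ FreeAlgebra.ι ℂ) = {eA P, fA P, hA P} := by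
    ext a
    simp [Fin.exists_fin_succ, eA, fA, hA, Egen, Fgen, Hgen, eq_comm]
  rw [← hrange, Set.range_comp, Algebra.adjoin_image, FreeAlgebra.adjoin_range_ι,
    Algebra.map_top, AlgHom.range_eq_top]
  exact RingQuot.mkAlgHom_surjective ℂ (ARel P)

end Relations

section Weights

variable {P : ℂ[X]}

def IsWeight (a : AP P) (k : ℤ) : Prop := IsAdEigen (hA P) a ((2 * k : ℤ) : ℂ)

theorem IsWeight.mul {a b : AP P} {k l : ℤ} (ha : IsWeight a k) (hb : IsWeight b l) :
    IsWeight (a * b) (k + l) := by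
  have := IsAdEigen.mul ha hb
  rwa [← Int.cast_add, ← mul_add] at this

theorem IsWeight.pow {a : AP P} {k : ℤ} (ha : IsWeight a k) (n : ℕ) : IsWeight (a ^ n) (n * k) := by
  have := IsAdEigen.pow ha n
  rwa [nsmul_eq_mul, ← Int.cast_natCast, ← Int.cast_mul, mul_left_comm] at this

theorem isWeight_eA : IsWeight (eA P) 1 := by
  rw [IsWeight, IsAdEigen, hA_mul_eA_sub]
  norm_num [two_smul, two_mul]

theorem isWeight_fA : IsWeight (fA P) (-1) := by
  rw [IsWeight, IsAdEigen, hA_mul_fA_sub, Algebra.smul_def,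
    show ((2 * -1 : ℤ) : ℂ) = -2 by norm_num, map_neg, map_ofNat]
  exact (neg_mul (2 : AP P) (fA P)).symm

theorem isWeight_aeval_hA (q : ℂ[X]) : IsWeight (aeval (hA P) q) 0 := by
  simpa [IsWeight] using isAdEigen_aeval_self (hA P) q

theorem isWeight_aeval_mul_eA_pow (q : ℂ[X]) (i : ℕ) : IsWeight (aeval (hA P) q * eA P ^ i) i := by
  simpa using (isWeight_aeval_hA q).mul (isWeight_eA.pow i)

theorem isWeight_aeval_mul_fA_pow (q : ℂ[X]) (i : ℕ) :
    IsWeight (aeval (hA P) q * fA P ^ i) (-i) := by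
  simpa using (isWeight_aeval_hA q).mul (isWeight_fA.pow i)

theorem eA_mul_hA : eA P * hA P = (hA P - 2) * eA P := by
  rw [sub_mul, ← hA_mul_eA_sub, sub_sub_cancel]

theorem fA_mul_hA : fA P * hA P = (hA P + 2) * fA P := by
  rw [add_mul, ← neg_neg (2 * fA P), ← hA_mul_fA_sub]
  abel

theorem eA_mul_aeval (q : ℂ[X]) : eA P * aeval (hA P) q = aeval (hA P - 2) q * eA P :=
  (SemiconjBy.aeval eA_mul_hA q).eq

theorem fA_mul_aeval (q : ℂ[X]) : fA P * aeval (hA P) q = aeval (hA P + 2) q * fA P :=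
  (SemiconjBy.aeval fA_mul_hA q).eq

end Weights

section Spanning

variable {P : ℂ[X]}

variable (P) in
def weightMonomials : Set (AP P) :=
  {m | ∃ (q : ℂ[X]) (i : ℕ), m = aeval (hA P) q * eA P ^ i ∨ m = aeval (hA P) q * fA P ^ i}

theorem exists_isWeight_of_mem_weightMonomials {m : AP P} (hm : m ∈ weightMonomials P) :
    ∃ k, IsWeight m k := by
  obtain ⟨q, i, rfl | rfl⟩ := hm
  exacts [⟨_, isWeight_aeval_mul_eA_pow q i⟩, ⟨_, isWeight_aeval_mul_fA_pow q i⟩]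

theorem mul_mem_weightMonomials {x m : AP P} (hx : x ∈ ({eA P, fA P, hA P} : Set (AP P)))
    (hm : m ∈ weightMonomials P) : x * m ∈ weightMonomials P := by
  rcases hx with rfl | rfl | rfl <;> obtain ⟨q, i, rfl | rfl⟩ := hm
  · refine ⟨q.comp (X - 2), i + 1, Or.inl ?_⟩
    rw [← mul_assoc, eA_mul_aeval, mul_assoc, ← pow_succ']
    simp [aeval_comp, map_ofNat]
  · rcases i with _ | i
    · exact ⟨q.comp (X - 2), 1, Or.inl (by simp [eA_mul_aeval, aeval_comp, map_ofNat])⟩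
    · refine ⟨q.comp (X - 2) * P.comp (X - 1), i, Or.inr ?_⟩
      rw [← mul_assoc, eA_mul_aeval, mul_assoc, pow_succ', ← mul_assoc (eA P), eA_mul_fA,
        ← mul_assoc, map_mul]
      simp [aeval_comp, map_ofNat]
  · rcases i with _ | i
    · exact ⟨q.comp (X + 2), 1, Or.inr (by simp [fA_mul_aeval, aeval_comp, map_ofNat])⟩
    · refine ⟨q.comp (X + 2) * P.comp (X + 1), i, Or.inl ?_⟩
      rw [← mul_assoc, fA_mul_aeval, mul_assoc, pow_succ', ← mul_assoc (fA P), fA_mul_eA,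
        ← mul_assoc, map_mul]
      simp [aeval_comp, map_ofNat]
  · refine ⟨q.comp (X + 2), i + 1, Or.inr ?_⟩
    rw [← mul_assoc, fA_mul_aeval, mul_assoc, ← pow_succ']
    simp [aeval_comp, map_ofNat]
  · exact ⟨X * q, i, Or.inl (by rw [← mul_assoc, map_mul, aeval_X])⟩
  · exact ⟨X * q, i, Or.inr (by rw [← mul_assoc, map_mul, aeval_X])⟩

theorem span_weightMonomials : Submodule.span ℂ (weightMonomials P) = ⊤ :=
  span_eq_top_of_mul_mem adjoin_eA_fA_hA
    (Submodule.subset_span ⟨1, 0, Or.inl (by simp)⟩)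
    fun _ hx _ hm => Submodule.subset_span (mul_mem_weightMonomials hx hm)

end Spanning

section TraceCriterion

variable {P : ℂ[X]} {T : AP P →ₗ[ℂ] ℂ}

def KillsWeightVectors (T : AP P →ₗ[ℂ] ℂ) : Prop :=
  ∀ a : AP P, (∃ k : ℤ, k ≠ 0 ∧ IsWeight a k) → T a = 0

def IsShiftInvariant (T : AP P →ₗ[ℂ] ℂ) : Prop :=
  ∀ S : ℂ[X], T (aeval (hA P - 1) (S * P)) = T (aeval (hA P + 1) (S * P))

theorem IsTrace.killsWeightVectors (hT : IsTrace T) : KillsWeightVectors T := by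
  rintro a ⟨k, hk, ha⟩
  have h := ha.map_mul_sub_map_mul T
  rw [hT, sub_self, eq_comm, smul_eq_zero] at h
  exact h.resolve_left (by exact_mod_cast mul_ne_zero two_ne_zero hk)

theorem IsTrace.isShiftInvariant (hT : IsTrace T) : IsShiftInvariant T := by
  intro S
  have hf : SemiconjBy (fA P) (hA P - 1) (hA P + 1) := by
    rw [SemiconjBy, mul_sub, mul_one, fA_mul_hA, ← one_add_one_eq_two]
    noncomm_ring
  calc T (aeval (hA P - 1) (S * P)) = T (fA P * (aeval (hA P - 1) S * eA P)) := by
        rw [aeval_mul, ← eA_mul_fA, ← mul_assoc, hT]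
    _ = T (aeval (hA P + 1) (S * P)) := by
        rw [← mul_assoc, (hf.aeval S).eq, mul_assoc, fA_mul_eA, aeval_mul]

theorem KillsWeightVectors.map_mul_comm (hw : KillsWeightVectors T) {x m : AP P} {k l : ℤ}
    (hx : IsWeight x k) (hm : IsWeight m l) (hkl : k + l ≠ 0) : T (x * m) = T (m * x) := by
  rw [hw _ ⟨_, hkl, hx.mul hm⟩, hw _ ⟨_, by omega, hm.mul hx⟩]

theorem KillsWeightVectors.map_hA_mul_comm (hw : KillsWeightVectors T) {m : AP P} {k : ℤ}
    (hm : IsWeight m k) : T (hA P * m) = T (m * hA P) := by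
  rw [← sub_eq_zero, hm.map_mul_sub_map_mul]
  rcases eq_or_ne k 0 with rfl | hk
  · simp
  · rw [hw m ⟨k, hk, hm⟩, smul_zero]

theorem KillsWeightVectors.map_mul_eA_comm (hw : KillsWeightVectors T) (hS : IsShiftInvariant T)
    {m : AP P} (hm : m ∈ weightMonomials P) : T (m * eA P) = T (eA P * m) := by
  obtain ⟨q, i, rfl | rfl⟩ := hm
  · exact (hw.map_mul_comm isWeight_eA (isWeight_aeval_mul_eA_pow q i) (by omega)).symm
  rcases eq_or_ne i 1 with rfl | hi
  · calc T (aeval (hA P) q * fA P ^ 1 * eA P)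
        = T (aeval (hA P + 1) (q.comp (X - 1) * P)) := by
          rw [pow_one, mul_assoc, fA_mul_eA, aeval_mul]
          simp [aeval_comp]
      _ = T (aeval (hA P - 1) (q.comp (X - 1) * P)) := (hS _).symm
      _ = T (eA P * (aeval (hA P) q * fA P ^ 1)) := by
          rw [pow_one, ← mul_assoc, eA_mul_aeval, mul_assoc, eA_mul_fA, aeval_mul]
          simp [aeval_comp, sub_sub, one_add_one_eq_two]
  · exact (hw.map_mul_comm isWeight_eA (isWeight_aeval_mul_fA_pow q i) (by omega)).symm

theorem KillsWeightVectors.map_mul_fA_comm (hw : KillsWeightVectors T) (hS : IsShiftInvariant T)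
    {m : AP P} (hm : m ∈ weightMonomials P) : T (m * fA P) = T (fA P * m) := by
  obtain ⟨q, i, rfl | rfl⟩ := hm
  · rcases eq_or_ne i 1 with rfl | hi
    · calc T (aeval (hA P) q * eA P ^ 1 * fA P)
          = T (aeval (hA P - 1) (q.comp (X + 1) * P)) := by
            rw [pow_one, mul_assoc, eA_mul_fA, aeval_mul]
            simp [aeval_comp]
        _ = T (aeval (hA P + 1) (q.comp (X + 1) * P)) := hS _
        _ = T (fA P * (aeval (hA P) q * eA P ^ 1)) := by
            rw [pow_one, ← mul_assoc, fA_mul_aeval, mul_assoc, fA_mul_eA, aeval_mul]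
            simp [aeval_comp, add_assoc, one_add_one_eq_two]
    · exact (hw.map_mul_comm isWeight_fA (isWeight_aeval_mul_eA_pow q i) (by omega)).symm
  · exact (hw.map_mul_comm isWeight_fA (isWeight_aeval_mul_fA_pow q i) (by omega)).symm

theorem isTrace_of_killsWeightVectors (hw : KillsWeightVectors T) (hS : IsShiftInvariant T) :
    IsTrace T := by
  have hC : traceCommutant T = ⊤ := by
    rw [eq_top_iff, ← adjoin_eA_fA_hA, Algebra.adjoin_le_iff]
    rintro x (rfl | rfl | rfl) <;>
      refine mem_traceCommutant_of_span_eq_top span_weightMonomials fun m hm => ?_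
    · exact hw.map_mul_eA_comm hS hm
    · exact hw.map_mul_fA_comm hS hm
    · obtain ⟨k, hk⟩ := exists_isWeight_of_mem_weightMonomials hm
      exact (hw.map_hA_mul_comm hk).symm
  exact fun a b => (hC ▸ Algebra.mem_top : b ∈ traceCommutant T) a

theorem isTrace_iff : IsTrace T ↔ KillsWeightVectors T ∧ IsShiftInvariant T :=
  ⟨fun hT => ⟨hT.killsWeightVectors, hT.isShiftInvariant⟩,
    fun h => isTrace_of_killsWeightVectors h.1 h.2⟩

end TraceCriterion

section ShiftMap

variable {P : ℂ[X]}

theorem shiftMap_apply (S : ℂ[X]) :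
    shiftMap P S = (S * P).comp (X + 1) - (S * P).comp (X - 1) := rfl

theorem natDegree_shiftMap (hP : 1 ≤ P.natDegree) {S : ℂ[X]} (hS : S ≠ 0) :
    (shiftMap P S).natDegree = S.natDegree + P.natDegree - 1 := by
  have hSP : (S * P).natDegree = S.natDegree + P.natDegree :=
    natDegree_mul hS (by rintro rfl; simp at hP)
  rw [shiftMap_apply, natDegree_comp_add_one_sub_comp_sub_one (by omega), hSP]

theorem leadingCoeff_shiftMap (hP : 1 ≤ P.natDegree) {S : ℂ[X]} (hS : S ≠ 0) :
    (shiftMap P S).leadingCoeff =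
      2 * ((S.natDegree + P.natDegree : ℕ) : ℂ) * (S.leadingCoeff * P.leadingCoeff) := by
  have hSP : (S * P).natDegree = S.natDegree + P.natDegree :=
    natDegree_mul hS (by rintro rfl; simp at hP)
  rw [shiftMap_apply, leadingCoeff_comp_add_one_sub_comp_sub_one (by omega), hSP, leadingCoeff_mul]

theorem disjoint_range_shiftMap_degreeLT (hP : 1 ≤ P.natDegree) :
    Disjoint (LinearMap.range (shiftMap P)) (degreeLT ℂ (P.natDegree - 1)) := by
  rw [Submodule.disjoint_def]
  rintro _ ⟨S, rfl⟩ hlt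
  by_contra hne
  have hS : S ≠ 0 := by rintro rfl; simp at hne
  rw [mem_degreeLT, degree_eq_natDegree hne, Nat.cast_lt, natDegree_shiftMap hP hS] at hlt
  omega

theorem exists_degree_sub_shiftMap_lt (hP : 1 ≤ P.natDegree) {p : ℂ[X]} (hp : p ≠ 0)
    (hdeg : P.natDegree - 1 ≤ p.natDegree) : ∃ S, (p - shiftMap P S).degree < p.degree := by
  have hP0 : P.leadingCoeff ≠ 0 := leadingCoeff_ne_zero.mpr (by rintro rfl; simp at hP)
  set c := p.leadingCoeff / (2 * (p.natDegree + 1 : ℕ) * P.leadingCoeff) with hcdef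
  have hc : c ≠ 0 := by simp [hcdef, hp, hP0]; norm_cast
  set S := C c * X ^ (p.natDegree + 1 - P.natDegree)
  have hS : S ≠ 0 := by simp [S, hc]
  have hSdeg : S.natDegree + P.natDegree = p.natDegree + 1 := by
    rw [natDegree_C_mul_X_pow _ _ hc]
    omega
  have hlc : (shiftMap P S).leadingCoeff = p.leadingCoeff := by
    rw [leadingCoeff_shiftMap hP hS, hSdeg, leadingCoeff_C_mul_X_pow, hcdef]
    field_simp
  have hne : shiftMap P S ≠ 0 := by
    rintro h
    rw [h, leadingCoeff_zero, eq_comm, leadingCoeff_eq_zero] at hlc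
    exact hp hlc
  refine ⟨S, degree_sub_lt_left ?_ hp hlc.symm⟩
  rw [degree_eq_natDegree hp, degree_eq_natDegree hne, natDegree_shiftMap hP hS, hSdeg,
    Nat.add_sub_cancel]

theorem range_shiftMap_sup_degreeLT (hP : 1 ≤ P.natDegree) :
    LinearMap.range (shiftMap P) ⊔ degreeLT ℂ (P.natDegree - 1) = ⊤ := by
  refine Submodule.eq_top_iff'.mpr fun p => ?_
  induction p using degree_lt_wf.induction with
  | _ p ih =>
    by_cases hlow : p ∈ degreeLT ℂ (P.natDegree - 1)
    · exact Submodule.mem_sup_right hlow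
    have hp : p ≠ 0 := by rintro rfl; exact hlow (zero_mem _)
    have hdeg : P.natDegree - 1 ≤ p.natDegree := by
      rw [mem_degreeLT, degree_eq_natDegree hp, Nat.cast_lt] at hlow
      omega
    obtain ⟨S, hS⟩ := exists_degree_sub_shiftMap_lt hP hp hdeg
    rw [← add_sub_cancel (shiftMap P S) p]
    exact add_mem (Submodule.mem_sup_left (LinearMap.mem_range_self _ S)) (ih _ hS)

theorem finrank_quotient_range_shiftMap (hP : 1 ≤ P.natDegree) :
    Module.finrank ℂ (ℂ[X] ⧸ LinearMap.range (shiftMap P)) = P.natDegree - 1 := by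
  have hcompl : IsCompl (LinearMap.range (shiftMap P)) (degreeLT ℂ (P.natDegree - 1)) :=
    ⟨disjoint_range_shiftMap_degreeLT hP, codisjoint_iff.mpr (range_shiftMap_sup_degreeLT hP)⟩
  rw [(Submodule.quotientEquivOfIsCompl _ _ hcompl).finrank_eq,
    (degreeLTEquiv ℂ _).finrank_eq, Module.finrank_fin_fun]

end ShiftMap

section Representation

variable {P : ℂ[X]}

def mulOp : (ℤ → ℂ[X]) →ₐ[ℂ] Module.End ℂ[X] (ℤ → ℂ[X]) :=
  (Algebra.lmul ℂ[X] (ℤ → ℂ[X])).restrictScalars ℂ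

def shiftOp (d : ℤ) : Module.End ℂ[X] (ℤ → ℂ[X]) := LinearMap.funLeft ℂ[X] ℂ[X] (· + d)

@[simp] theorem mulOp_apply (w v : ℤ → ℂ[X]) (j : ℤ) : mulOp w v j = w j * v j := rfl

@[simp] theorem shiftOp_apply (d : ℤ) (v : ℤ → ℂ[X]) (j : ℤ) : shiftOp d v j = v (j + d) := rfl

theorem aeval_mulOp (w : ℤ → ℂ[X]) (q : ℂ[X]) :
    aeval (mulOp w) q = mulOp fun j => q.comp (w j) := by
  rw [aeval_algHom_apply, aeval_pi_apply]
  rfl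

def hRep : Module.End ℂ[X] (ℤ → ℂ[X]) := mulOp fun j => X + C (2 * (j : ℂ))

def eRep : Module.End ℂ[X] (ℤ → ℂ[X]) := shiftOp (-1)

def fRep (P : ℂ[X]) : Module.End ℂ[X] (ℤ → ℂ[X]) :=
  mulOp (fun j => P.comp (X + C (2 * (j : ℂ) + 1))) * shiftOp 1

theorem hRep_mul_eRep_sub : hRep * eRep - eRep * hRep = 2 * eRep := by
  refine LinearMap.ext fun v => funext fun j => ?_
  simp [hRep, eRep, C_mul, C_ofNat]
  ring

theorem hRep_mul_fRep_sub : hRep * fRep P - fRep P * hRep = -(2 * fRep P) := by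
  refine LinearMap.ext fun v => funext fun j => ?_
  simp [hRep, fRep, C_add, C_mul, C_ofNat]
  ring

theorem eRep_mul_fRep : eRep * fRep P = aeval (hRep - 1) P := by
  refine LinearMap.ext fun v => funext fun j => ?_
  rw [hRep, ← map_one mulOp, ← map_sub, aeval_mulOp]
  simp only [eRep, fRep, Module.End.mul_apply, mulOp_apply, shiftOp_apply, neg_add_cancel_right]
  congr 2
  simp [C_ofNat]
  ring

theorem fRep_mul_eRep : fRep P * eRep = aeval (hRep + 1) P := by
  refine LinearMap.ext fun v => funext fun j => ?_
  rw [hRep, ← map_one mulOp, ← map_add, aeval_mulOp]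
  simp only [eRep, fRep, Module.End.mul_apply, mulOp_apply, shiftOp_apply, add_neg_cancel_right]
  congr 2
  simp [C_ofNat]
  ring

variable (P) in
def rep : AP P →ₐ[ℂ] Module.End ℂ[X] (ℤ → ℂ[X]) :=
  RingQuot.liftAlgHom ℂ ⟨FreeAlgebra.lift ℂ ![eRep, fRep P, hRep], by
    rintro _ _ ⟨⟩ <;>
      simp [Egen, Fgen, Hgen, ← aeval_algHom_apply, map_ofNat, hRep_mul_eRep_sub,
        hRep_mul_fRep_sub, eRep_mul_fRep, fRep_mul_eRep]⟩

@[simp] theorem rep_hA : rep P (hA P) = hRep := by simp [rep, hA, Hgen]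

end Representation

section TraceOfDual

variable {P : ℂ[X]}

variable (P) in
def traceOfDual (φ : Module.Dual ℂ ℂ[X]) : AP P →ₗ[ℂ] ℂ where
  toFun a := φ (rep P a (Pi.single 0 1) 0)
  map_add' a b := by simp
  map_smul' c a := by simp

theorem traceOfDual_aeval_hA (φ : Module.Dual ℂ ℂ[X]) (q : ℂ[X]) :
    traceOfDual P φ (aeval (hA P) q) = φ q := by
  simp [traceOfDual, ← aeval_algHom_apply, hRep, aeval_mulOp]

theorem killsWeightVectors_traceOfDual (φ : Module.Dual ℂ ℂ[X]) :
    KillsWeightVectors (traceOfDual P φ) := by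
  rintro a ⟨k, hk, ha⟩
  have hδ : hRep (Pi.single 0 1 : ℤ → ℂ[X]) = (X : ℂ[X]) • Pi.single 0 1 := by
    ext1 j
    rcases eq_or_ne j 0 with rfl | hj <;> simp [hRep, *]
  -- `rep P a` is `ℂ[x]`-linear and `h δ₀ = x δ₀`, so `ad h` acts on slot `0` of `a δ₀` by zero.
  have h0 := congrFun (LinearMap.congr_fun (ha.map (rep P)) (Pi.single 0 1)) 0
  rw [rep_hA, LinearMap.sub_apply, Module.End.mul_apply, Module.End.mul_apply, hδ, map_smul] at h0
  simp [hRep] at h0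
  have hv : rep P a (Pi.single 0 1) 0 = 0 :=
    (smul_eq_zero.mp h0.symm).resolve_left (by simpa using hk)
  simp [traceOfDual, hv]

theorem aeval_hA_sub_one (Q : ℂ[X]) : aeval (hA P - 1) Q = aeval (hA P) (Q.comp (X - 1)) := by
  simp [aeval_comp]

theorem aeval_hA_add_one (Q : ℂ[X]) : aeval (hA P + 1) Q = aeval (hA P) (Q.comp (X + 1)) := by
  simp [aeval_comp]

theorem isTrace_traceOfDual {φ : Module.Dual ℂ ℂ[X]}
    (hφ : φ ∈ (LinearMap.range (shiftMap P)).dualAnnihilator) : IsTrace (traceOfDual P φ) := by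
  refine isTrace_of_killsWeightVectors (killsWeightVectors_traceOfDual φ) fun S => ?_
  have h := (Submodule.mem_dualAnnihilator φ).mp hφ _ (LinearMap.mem_range_self _ S)
  rw [aeval_hA_sub_one, aeval_hA_add_one, traceOfDual_aeval_hA, traceOfDual_aeval_hA]
  rw [shiftMap_apply, map_sub, sub_eq_zero] at h
  exact h.symm

end TraceOfDual

section TraceSpace

variable {P : ℂ[X]}

theorem IsTrace.eq_zero_of_aeval_hA {T : AP P →ₗ[ℂ] ℂ} (hT : IsTrace T)
    (h0 : ∀ q : ℂ[X], T (aeval (hA P) q) = 0) : T = 0 := by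
  refine Submodule.linearMap_eq_zero_iff_of_span_eq_top _ span_weightMonomials |>.mpr ?_
  rintro ⟨_, q, i, rfl | rfl⟩ <;> rcases eq_or_ne i 0 with rfl | hi
  · simpa using h0 q
  · exact hT.killsWeightVectors _ ⟨i, by omega, isWeight_aeval_mul_eA_pow q i⟩
  · simpa using h0 q
  · exact hT.killsWeightVectors _ ⟨-i, by omega, isWeight_aeval_mul_fA_pow q i⟩

variable (P) in
def tracesToDualAnnihilator :
    tracesSubmodule P →ₗ[ℂ] (LinearMap.range (shiftMap P)).dualAnnihilator :=
  (aeval (hA P)).toLinearMap.dualMap.restrict fun T hT => by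
    rw [Submodule.mem_dualAnnihilator]
    rintro _ ⟨S, rfl⟩
    have h := IsTrace.isShiftInvariant hT S
    rw [aeval_hA_sub_one, aeval_hA_add_one] at h
    change T (aeval (hA P) (shiftMap P S)) = 0
    rw [shiftMap_apply, map_sub, map_sub, h, sub_self]

theorem tracesToDualAnnihilator_bijective : Function.Bijective (tracesToDualAnnihilator P) := by
  refine ⟨(injective_iff_map_eq_zero _).mpr fun T hT => ?_, fun φ => ?_⟩
  · refine Subtype.ext (IsTrace.eq_zero_of_aeval_hA T.2 fun q => ?_)
    exact congrArg (· q) (congrArg Subtype.val hT)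
  · refine ⟨⟨traceOfDual P φ, isTrace_traceOfDual φ.2⟩, Subtype.ext ?_⟩
    exact LinearMap.ext (traceOfDual_aeval_hA φ)

theorem finrank_tracesSubmodule :
    Module.finrank ℂ (tracesSubmodule P) =
      Module.finrank ℂ (ℂ[X] ⧸ LinearMap.range (shiftMap P)) := by
  rw [LinearEquiv.finrank_eq (.ofBijective _ tracesToDualAnnihilator_bijective),
    ← LinearEquiv.finrank_eq (Submodule.dualQuotEquivDualAnnihilator _), Subspace.dual_finrank_eq]

end TraceSpace

theorem stmt5 (P : ℂ[X]) (n : ℕ) (hn : 1 ≤ n) (hdeg : P.natDegree = n)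
    (T : AP P →ₗ[ℂ] ℂ) :
    ((∀ a b : AP P, T (a * b) = T (b * a)) ↔
      ((∀ a : AP P,
          (∃ k : ℤ, k ≠ 0 ∧ hA P * a - a * hA P = (((2 * k : ℤ) : ℂ)) • a) → T a = 0) ∧
        ∀ S : ℂ[X],
          T (Polynomial.aeval (hA P - 1) (S * P)) =
            T (Polynomial.aeval (hA P + 1) (S * P)))) ∧
    Module.finrank ℂ (tracesSubmodule P) = n - 1 ∧
    Module.finrank ℂ (ℂ[X] ⧸ LinearMap.range (shiftMap P)) = n - 1 := by
  subst hdeg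
  exact ⟨isTrace_iff, finrank_tracesSubmodule.trans (finrank_quotient_range_shiftMap hn),
    finrank_quotient_range_shiftMap hn⟩

end
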